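/- In the unitary Cayley graph of Z_n with n = 2^{r₁} p₂^{r₂}⋯p_t^{r_t} (t ≥ 2, odd primes), two nonadjacent distinct vertices x, y are at distance 3 if and only if x - y is odd. -/

import Mathlib

/-- The unitary Cayley graph of a commutative ring: vertices are ring elements,
with `x ~ y` iff `x ≠ y` and `x - y` is a unit. -/
def unitaryCayley (R : Type*) [CommRing R] : SimpleGraph R where
  Adj x y := x ≠ y ∧ IsUnit (x - y)
  symm := by
    constructor
    rintro x y ⟨hne, hu⟩
    exact ⟨hne.symm, by simpa [neg_sub] using hu.neg⟩
  loopless := ⟨by rintro x ⟨h, -⟩; exact h rfl⟩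

/-- A packing `k`-coloring: every vertex gets a color in `{1, …, k}`, and any two
distinct vertices with the same color `i` are at distance greater than `i`
(`edist` equals `⊤` for unreachable pairs, which counts as distance greater than `i`). -/
def SimpleGraph.IsPackingColoring {V : Type*} (G : SimpleGraph V) (k : ℕ) (c : V → ℕ) : Prop :=
  (∀ v, 1 ≤ c v ∧ c v ≤ k) ∧
    ∀ u v, u ≠ v → c u = c v → (c u : ℕ∞) < G.edist u v

/-- The packing chromatic number: the least `k` admitting a packing `k`-coloring. -/
noncomputable def SimpleGraph.packingChromaticNumber {V : Type*} (G : SimpleGraph V) : ℕ :=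
  sInf {k | ∃ c : V → ℕ, G.IsPackingColoring k c}

/-- The independence number: the largest cardinality of a set of pairwise
nonadjacent vertices. -/
noncomputable def SimpleGraph.indepNum' {V : Type*} (G : SimpleGraph V) : ℕ :=
  sSup {n | ∃ s : Finset V, (∀ u ∈ s, ∀ v ∈ s, u ≠ v → ¬ G.Adj u v) ∧ s.card = n}

/-- The tensor (direct, categorical) product of two simple graphs. -/
def tensorProd {V W : Type*} (G : SimpleGraph V) (H : SimpleGraph W) :
    SimpleGraph (V × W) where
  Adj a b := G.Adj a.1 b.1 ∧ H.Adj a.2 b.2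
  symm := ⟨fun _ _ ⟨h1, h2⟩ => ⟨h1.symm, h2.symm⟩⟩
  loopless := ⟨fun a h => G.loopless.irrefl a.1 h.1⟩

/-- The tensor (direct, categorical) product of a family of simple graphs. -/
def tensorPi {ι : Type*} [Nonempty ι] {V : ι → Type*} (G : ∀ i, SimpleGraph (V i)) :
    SimpleGraph (∀ i, V i) where
  Adj a b := ∀ i, (G i).Adj (a i) (b i)
  symm := ⟨fun _ _ h i => (h i).symm⟩
  loopless := ⟨fun a h => (G (Classical.arbitrary ι)).loopless.irrefl _ (h _)⟩

/-! A difference `x - y` in `ℤ/n` is a sum of two units as soon as, modulo each prime `p ∣ n`,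
one can pick a residue avoiding both `0` and `x - y`; this is possible for odd `p` always and
for `p = 2` exactly when `x - y` is even. So even differences give paths of length two, and an
odd difference `x - y = 1 + (x - 1 - y)` gives a path of length three. Conversely, reduction
mod `2` sends every edge to `1`, so the length of every walk from `x` to `y` has the parity of
`x - y`; a non-adjacent pair with odd difference is therefore at distance exactly three. -/

namespace ZMod

lemma isUnit_of_forall_castHom_ne_zero {n : ℕ} [NeZero n] {a : ZMod n}
    (h : ∀ p : ℕ, p.Prime → ∀ hp : p ∣ n, castHom hp (ZMod p) a ≠ 0) : IsUnit a := by
  rw [← natCast_zmod_val a, isUnit_iff_coprime]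
  refine Nat.coprime_of_dvd fun p hp hpa hpn => h p hp hpn ?_
  rw [castHom_apply, cast_eq_val, natCast_eq_zero_iff]
  exact hpa

lemma exists_ne_zero_ne_of_prime {p : ℕ} (hp : p.Prime) (c : ZMod p) (hc : p = 2 → c = 0) :
    ∃ r : ZMod p, r ≠ 0 ∧ r ≠ c := by
  have : Fact p.Prime := ⟨hp⟩
  rcases eq_or_ne p 2 with rfl | hp2
  · exact ⟨1, one_ne_zero, by rw [hc rfl]; exact one_ne_zero⟩
  · have hcard : ({0, c} : Finset (ZMod p)).card < (Finset.univ : Finset (ZMod p)).card :=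
      Finset.card_le_two.trans_lt (by
        rw [Finset.card_univ, card]
        exact lt_of_le_of_ne hp.two_le hp2.symm)
    obtain ⟨r, -, hr⟩ := Finset.exists_mem_notMem_of_card_lt_card hcard
    simp only [Finset.mem_insert, Finset.mem_singleton, not_or] at hr
    exact ⟨r, hr⟩

lemma exists_isUnit_add_isUnit_eq {n : ℕ} (hn : n ≠ 0) (c : ZMod n)
    (hc : ∀ h2 : 2 ∣ n, castHom h2 (ZMod 2) c = 0) :
    ∃ u v : ZMod n, IsUnit u ∧ IsUnit v ∧ u + v = c := by
  have : NeZero n := ⟨hn⟩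
  have hres : ∀ p : n.primeFactors, ∃ r : ZMod p,
      r ≠ 0 ∧ r ≠ castHom (Nat.dvd_of_mem_primeFactors p.2) (ZMod p) c := by
    rintro ⟨p, hp⟩
    refine exists_ne_zero_ne_of_prime (Nat.prime_of_mem_primeFactors hp) _ ?_
    rintro rfl
    exact hc _
  choose r hr using hres
  have hcop : Set.Pairwise (Finset.univ : Finset n.primeFactors)
      fun p q : n.primeFactors => Nat.Coprime p q :=
    fun p _ q _ hpq => (Nat.coprime_primes (Nat.prime_of_mem_primeFactors p.2)
      (Nat.prime_of_mem_primeFactors q.2)).mpr (Subtype.coe_injective.ne hpq)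
  obtain ⟨k, hk⟩ := Nat.chineseRemainderOfFinset (fun p => (r p).val) (↑) Finset.univ
    (fun p _ => (Nat.prime_of_mem_primeFactors p.2).ne_zero) hcop
  have hkr : ∀ p (hp : p ∈ n.primeFactors),
      castHom (Nat.dvd_of_mem_primeFactors hp) (ZMod p) k = r ⟨p, hp⟩ := by
    intro p hp
    have : NeZero p := ⟨(Nat.prime_of_mem_primeFactors hp).ne_zero⟩
    rw [map_natCast, ← natCast_zmod_val (r ⟨p, hp⟩), natCast_eq_natCast_iff]
    exact hk ⟨p, hp⟩ (Finset.mem_univ _)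
  refine ⟨k, c - k, ?_, ?_, add_sub_cancel _ _⟩ <;>
    refine isUnit_of_forall_castHom_ne_zero fun p hp hpn => ?_
  · rw [hkr p (Nat.mem_primeFactors.mpr ⟨hp, hpn, hn⟩)]
    exact (hr _).1
  · rw [map_sub, hkr p (Nat.mem_primeFactors.mpr ⟨hp, hpn, hn⟩), sub_ne_zero]
    exact (hr ⟨p, _⟩).2.symm

end ZMod

namespace unitaryCayley

variable {R : Type*} [CommRing R]

lemma adj_of_isUnit_sub [Nontrivial R] {x y : R} (h : IsUnit (x - y)) :
    (unitaryCayley R).Adj x y :=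
  ⟨fun hxy => not_isUnit_zero (by rwa [hxy, sub_self] at h), h⟩

lemma exists_walk_length_two [Nontrivial R] {x y u v : R} (hu : IsUnit u) (hv : IsUnit v)
    (huv : u + v = x - y) : ∃ w : (unitaryCayley R).Walk x y, w.length = 2 := by
  have hxu : (unitaryCayley R).Adj x (x - u) := adj_of_isUnit_sub (by rwa [sub_sub_cancel])
  have huy : (unitaryCayley R).Adj (x - u) y :=
    adj_of_isUnit_sub (by rwa [show x - u - y = v by linear_combination -huv])
  exact ⟨.cons hxu (.cons huy .nil), rfl⟩

lemma exists_walk_length_three [Nontrivial R] {x y u v : R} (hu : IsUnit u) (hv : IsUnit v)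
    (huv : u + v = x - y - 1) : ∃ w : (unitaryCayley R).Walk x y, w.length = 3 := by
  have hx : (unitaryCayley R).Adj x (x - 1) :=
    adj_of_isUnit_sub (by rw [sub_sub_cancel]; exact isUnit_one)
  obtain ⟨w, hw⟩ := exists_walk_length_two hu hv (huv.trans (sub_right_comm _ _ _))
  exact ⟨.cons hx w, by rw [SimpleGraph.Walk.length_cons, hw]⟩

/-- Any ring map to `ZMod 2` sends units to `1`, hence every edge to `1`. -/
lemma walk_length_cast_eq (f : R →+* ZMod 2) {x y : R} (w : (unitaryCayley R).Walk x y) :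
    (w.length : ZMod 2) = f (x - y) := by
  induction w with
  | nil => simp
  | @cons u v z huv _ ih =>
    have hunit : ∀ a : ZMod 2, IsUnit a → a = 1 := by decide
    rw [SimpleGraph.Walk.length_cons, Nat.cast_succ, ih,
      show u - z = (v - z) + (u - v) by ring, map_add, hunit _ (huv.2.map f)]

lemma dist_cast_eq (f : R →+* ZMod 2) {x y : R} (h : (unitaryCayley R).Reachable x y) :
    ((unitaryCayley R).dist x y : ZMod 2) = f (x - y) := by
  obtain ⟨w, hw⟩ := h.exists_walk_length_eq_dist
  rw [← hw, walk_length_cast_eq]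

end unitaryCayley

theorem stmt13_general (n : ℕ) (ht : 2 ≤ n.primeFactors.card) (heven : n.minFac = 2)
    (x y : ZMod n) (hadj : ¬ (unitaryCayley (ZMod n)).Adj x y) :
    (unitaryCayley (ZMod n)).dist x y = 3 ↔ Odd (x - y).val := by
  have hn : n ≠ 0 := by
    rintro rfl
    simp at ht
  have : NeZero n := ⟨hn⟩
  have h2 : 2 ∣ n := heven ▸ n.minFac_dvd
  have : Fact (1 < n) := ⟨Nat.le_of_dvd (Nat.pos_of_ne_zero hn) h2⟩
  set φ := ZMod.castHom h2 (ZMod 2)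
  have hφ : φ (x - y) = (x - y).val := ZMod.cast_eq_val _
  rcases Nat.even_or_odd (x - y).val with hxy | hxy
  · obtain ⟨u, v, hu, hv, huv⟩ := ZMod.exists_isUnit_add_isUnit_eq hn (x - y) fun _ => by
      rwa [hφ, ZMod.natCast_eq_zero_iff_even]
    obtain ⟨w, hw⟩ := unitaryCayley.exists_walk_length_two hu hv huv
    have hle := SimpleGraph.dist_le w
    exact iff_of_false (by omega) (Nat.not_odd_iff_even.mpr hxy)
  · have hφ1 : φ (x - y) = 1 := by rwa [hφ, ZMod.natCast_eq_one_iff_odd]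
    obtain ⟨u, v, hu, hv, huv⟩ := ZMod.exists_isUnit_add_isUnit_eq hn (x - y - 1) fun _ => by
      rw [map_sub, hφ1, map_one, sub_self]
    obtain ⟨w, hw⟩ := unitaryCayley.exists_walk_length_three hu hv huv
    have hle := SimpleGraph.dist_le w
    have hpar := unitaryCayley.dist_cast_eq φ w.reachable
    rw [hφ1, ZMod.natCast_eq_one_iff_odd, Nat.odd_iff] at hpar
    have hne : (unitaryCayley (ZMod n)).dist x y ≠ 1 := mt SimpleGraph.dist_eq_one_iff_adj.mp hadj
    exact iff_of_true (by omega) hxy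

theorem stmt13 (n : ℕ) (ht : 2 ≤ n.primeFactors.card) (heven : n.minFac = 2)
    (x y : ZMod n) (hxy : x ≠ y) (hadj : ¬ (unitaryCayley (ZMod n)).Adj x y) :
    (unitaryCayley (ZMod n)).dist x y = 3 ↔ Odd (x - y).val :=
  stmt13_general n ht heven x y hadj
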